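/- Let L be a field with discrete valuation v and residue field κ. For any a ∈ L^× with v(a) = 0 and v(1−a) = 0 (and a ≠ 1), the tame symbol t(a, 1−a) = 1 in κ^×; more generally for any a ≠ 0, 1 in L^×, t(a, 1−a) = 1, so the tame symbol descends to a homomorphism K₂ᴹ(L) → κ^×. -/

import Mathlib

/-!
The tame symbol is bimultiplicative and skew-symmetric, and `t(a, -a) = 1` since
`a^{v(a)} (-a)^{-v(a)} = (-1)^{v(a)}` and `v(a)² + v(a)` is even. The Steinberg relation
`t(a, 1 - a) = 1` then follows by cases on `v(a)`: if `v(a) > 0`, then `1 - a` is a unit of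
the valuation ring with residue `1`; if `v(a) < 0`, write `1 - a = -a (1 - a⁻¹)` and apply the
first case to `a⁻¹`; if `v(a) = 0`, either `1 - a` is a unit and the symbol is `ρ(1 - a)⁰ = 1`,
or `v(1 - a) > 0` and skew-symmetry reduces to the first case for `1 - a`.
Hence the bimultiplicative symbol factors through `K₂ᴹ(L)`.
-/

open TensorProduct

/-- The data of a discrete valuation `v` on a field `L` together with its
valuation ring `A`, residue field `κ` and reduction map `ρ`. -/
structure DiscValData (L κ : Type*) [Field L] [Field κ] where
  /-- the discrete valuation, written multiplicatively on units -/
  v : Lˣ →* Multiplicative ℤ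
  surj : Function.Surjective v
  /-- the valuation ring -/
  A : Subring L
  memA : ∀ x : Lˣ, (x : L) ∈ A ↔ 0 ≤ (v x).toAdd
  /-- reduction to the residue field -/
  ρ : A →+* κ
  ρsurj : Function.Surjective ρ
  ker_ρ : ∀ (x : Lˣ) (hx : (x : L) ∈ A), ρ ⟨x, hx⟩ = 0 ↔ 0 < (v x).toAdd

namespace DiscValData

variable {L κ : Type*} [Field L] [Field κ] (d : DiscValData L κ)

theorem val_unit_mem (f g : Lˣ) :
    ((f ^ (d.v g).toAdd * g ^ (-(d.v f).toAdd) : Lˣ) : L) ∈ d.A := by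
  rw [d.memA]
  have : (d.v (f ^ (d.v g).toAdd * g ^ (-(d.v f).toAdd))).toAdd = 0 := by
    simp only [map_mul, map_zpow, toAdd_mul, toAdd_zpow, smul_eq_mul]
    ring
  omega

/-- The tame symbol `t(f,g) = (-1)^{v(f)v(g)} · ρ(f^{v(g)}/g^{v(f)})`. -/
noncomputable def t (f g : Lˣ) : κ :=
  (-1 : κ) ^ ((d.v f).toAdd * (d.v g).toAdd) *
    d.ρ ⟨((f ^ (d.v g).toAdd * g ^ (-(d.v f).toAdd) : Lˣ) : L), d.val_unit_mem f g⟩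

end DiscValData

/-- The set of Steinberg elements `a ⊗ (1 - a)` for `a ≠ 0, 1`. -/
def SteinbergSet (L : Type*) [Field L] :
    Set (TensorProduct ℤ (Additive Lˣ) (Additive Lˣ)) :=
  {x | ∃ (a : Lˣ) (h : (1 : L) - a ≠ 0),
    x = Additive.ofMul a ⊗ₜ[ℤ] Additive.ofMul (Units.mk0 ((1 : L) - a) h)}

/-- The Milnor K-group `K₂ᴹ(L)`. -/
def K2M (L : Type*) [Field L] :=
  (TensorProduct ℤ (Additive Lˣ) (Additive Lˣ)) ⧸
    AddSubgroup.closure (SteinbergSet L)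

noncomputable instance (L : Type*) [Field L] : AddCommGroup (K2M L) :=
  QuotientAddGroup.Quotient.addCommGroup _

/-- The Milnor symbol `{f, g}` in `K₂ᴹ(L)`. -/
noncomputable def K2symbol {L : Type*} [Field L] (f g : Lˣ) : K2M L :=
  QuotientAddGroup.mk (Additive.ofMul f ⊗ₜ[ℤ] Additive.ofMul g)

namespace DiscValData

variable {L κ : Type*} [Field L] [Field κ] (d : DiscValData L κ)

lemma mem_ker_iff {x : Lˣ} : x ∈ d.v.ker ↔ (d.v x).toAdd = 0 := by
  rw [MonoidHom.mem_ker, toAdd_eq_zero]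

lemma coe_mem_A_of_mem_ker {x : Lˣ} (hx : x ∈ d.v.ker) : (x : L) ∈ d.A :=
  (d.memA x).2 (d.mem_ker_iff.1 hx).ge

lemma ρ_ne_zero_of_mem_ker {x : Lˣ} (hx : x ∈ d.v.ker) :
    d.ρ ⟨x, d.coe_mem_A_of_mem_ker hx⟩ ≠ 0 := by
  rw [ne_eq, d.ker_ρ, d.mem_ker_iff.1 hx]
  exact lt_irrefl 0

noncomputable def residueUnit : d.v.ker →* κˣ where
  toFun x := Units.mk0 _ (d.ρ_ne_zero_of_mem_ker x.2)
  map_one' := Units.ext d.ρ.map_one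
  map_mul' x y := Units.ext (d.ρ.map_mul ⟨(x : Lˣ), d.coe_mem_A_of_mem_ker x.2⟩
    ⟨(y : Lˣ), d.coe_mem_A_of_mem_ker y.2⟩)

@[simp]
lemma coe_residueUnit (x : d.v.ker) :
    (d.residueUnit x : κ) = d.ρ ⟨(x : Lˣ), d.coe_mem_A_of_mem_ker x.2⟩ := rfl

lemma neg_one_mem_ker : (-1 : Lˣ) ∈ d.v.ker := by
  rw [d.mem_ker_iff]
  have h : 2 * (d.v (-1 : Lˣ)).toAdd = 0 := by
    rw [two_mul, ← toAdd_mul, ← map_mul, neg_one_mul, neg_neg, map_one, toAdd_one]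
  omega

lemma residueUnit_neg_one : d.residueUnit ⟨-1, d.neg_one_mem_ker⟩ = -1 := by
  ext
  simp only [coe_residueUnit, Units.val_neg, Units.val_one]
  rw [← map_one d.ρ, ← map_neg]
  rfl

lemma ρ_one_sub_of_pos {x : Lˣ} (hx : 0 < (d.v x).toAdd) :
    d.ρ ⟨1 - x, sub_mem d.A.one_mem ((d.memA x).2 hx.le)⟩ = 1 := by
  rw [show (⟨1 - x, _⟩ : d.A) = 1 - ⟨x, (d.memA x).2 hx.le⟩ from rfl, map_sub, map_one,
    (d.ker_ρ x _).2 hx, sub_zero]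

lemma one_sub_mem_ker_of_pos {x : Lˣ} (hx : 0 < (d.v x).toAdd) (h : (1 : L) - x ≠ 0) :
    Units.mk0 _ h ∈ d.v.ker := by
  have hA : ((Units.mk0 _ h : Lˣ) : L) ∈ d.A := sub_mem d.A.one_mem ((d.memA x).2 hx.le)
  have hnonneg := (d.memA _).1 hA
  have hnotpos : ¬ 0 < (d.v (Units.mk0 _ h)).toAdd := by
    rw [← d.ker_ρ _ hA]
    exact (d.ρ_one_sub_of_pos hx).symm ▸ one_ne_zero
  rw [d.mem_ker_iff]
  omega

lemma residueUnit_one_sub_of_pos {x : Lˣ} (hx : 0 < (d.v x).toAdd) (h : (1 : L) - x ≠ 0) :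
    d.residueUnit ⟨_, d.one_sub_mem_ker_of_pos hx h⟩ = 1 :=
  Units.ext (d.ρ_one_sub_of_pos hx)

lemma val_unit_mem_ker (f g : Lˣ) : f ^ (d.v g).toAdd * g ^ (-(d.v f).toAdd) ∈ d.v.ker := by
  rw [d.mem_ker_iff]
  simp only [map_mul, map_zpow, toAdd_mul, toAdd_zpow, smul_eq_mul]
  ring

noncomputable def tameUnit (f g : Lˣ) : κˣ :=
  (-1) ^ ((d.v f).toAdd * (d.v g).toAdd) * d.residueUnit ⟨_, d.val_unit_mem_ker f g⟩

lemma coe_tameUnit (f g : Lˣ) : (d.tameUnit f g : κ) = d.t f g := by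
  rw [tameUnit, Units.val_mul, Units.val_zpow_eq_zpow_val, Units.val_neg, Units.val_one,
    coe_residueUnit, t]

lemma tameUnit_eq_of_coe_eq {f g : Lˣ} (x : d.v.ker)
    (hx : (x : Lˣ) = f ^ (d.v g).toAdd * g ^ (-(d.v f).toAdd)) :
    d.tameUnit f g = (-1) ^ ((d.v f).toAdd * (d.v g).toAdd) * d.residueUnit x := by
  rw [tameUnit, show x = ⟨_, d.val_unit_mem_ker f g⟩ from Subtype.ext hx]

lemma tameUnit_mul_right (f g g' : Lˣ) :
    d.tameUnit f (g * g') = d.tameUnit f g * d.tameUnit f g' := by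
  have hprod : ((⟨_, d.val_unit_mem_ker f g⟩ * ⟨_, d.val_unit_mem_ker f g'⟩ : d.v.ker) : Lˣ) =
      f ^ (d.v (g * g')).toAdd * (g * g') ^ (-(d.v f).toAdd) := by
    rw [Subgroup.coe_mul, map_mul d.v, toAdd_mul, zpow_add, mul_zpow, mul_mul_mul_comm]
  rw [d.tameUnit_eq_of_coe_eq _ hprod, tameUnit, tameUnit, map_mul d.residueUnit, map_mul d.v,
    toAdd_mul, mul_add, zpow_add, mul_mul_mul_comm]

lemma tameUnit_swap (f g : Lˣ) : d.tameUnit g f = (d.tameUnit f g)⁻¹ := by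
  have hinv : ((⟨_, d.val_unit_mem_ker f g⟩⁻¹ : d.v.ker) : Lˣ) =
      g ^ (d.v f).toAdd * f ^ (-(d.v g).toAdd) := by
    rw [InvMemClass.coe_inv, mul_inv, ← zpow_neg, ← zpow_neg, neg_neg, mul_comm]
  rw [d.tameUnit_eq_of_coe_eq _ hinv, tameUnit, map_inv, mul_inv, ← inv_zpow, inv_neg_one,
    mul_comm (d.v g).toAdd]

lemma tameUnit_mul_left (f f' g : Lˣ) :
    d.tameUnit (f * f') g = d.tameUnit f g * d.tameUnit f' g := by
  rw [← inv_inj, ← d.tameUnit_swap, d.tameUnit_mul_right, mul_inv, ← d.tameUnit_swap,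
    ← d.tameUnit_swap]

lemma tameUnit_inv_left (f g : Lˣ) : d.tameUnit f⁻¹ g = (d.tameUnit f g)⁻¹ := by
  have hone : d.tameUnit 1 g = 1 := by simpa using d.tameUnit_mul_left 1 1 g
  exact eq_inv_of_mul_eq_one_left (by rw [← d.tameUnit_mul_left, inv_mul_cancel, hone])

lemma tameUnit_of_mem_ker_right {f g : Lˣ} (hg : g ∈ d.v.ker) :
    d.tameUnit f g = d.residueUnit ⟨g, hg⟩ ^ (-(d.v f).toAdd) := by
  have hvg := d.mem_ker_iff.1 hg
  rw [d.tameUnit_eq_of_coe_eq (⟨g, hg⟩ ^ (-(d.v f).toAdd)) (by simp [hvg]), hvg, mul_zero,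
    zpow_zero, one_mul, map_zpow]

lemma tameUnit_self_neg (f : Lˣ) : d.tameUnit f (-f) = 1 := by
  have hv : (d.v (-f)).toAdd = (d.v f).toAdd := by
    rw [← neg_one_mul, map_mul, toAdd_mul, d.mem_ker_iff.1 d.neg_one_mem_ker, zero_add]
  have hx : ((⟨-1, d.neg_one_mem_ker⟩ ^ (d.v f).toAdd : d.v.ker) : Lˣ) =
      f ^ (d.v (-f)).toAdd * (-f) ^ (-(d.v f).toAdd) := by
    rw [Subgroup.coe_zpow, hv, ← neg_one_mul f, mul_zpow, mul_left_comm, ← zpow_add,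
      add_neg_cancel, zpow_zero, mul_one, zpow_neg, ← inv_zpow, inv_neg_one]
  rw [d.tameUnit_eq_of_coe_eq _ hx, hv, map_zpow, d.residueUnit_neg_one, ← zpow_add,
    ← mul_add_one, Even.neg_one_zpow (Int.even_mul_succ_self _)]

lemma tameUnit_one_sub_of_pos {a : Lˣ} (ha : 0 < (d.v a).toAdd) (h : (1 : L) - a ≠ 0) :
    d.tameUnit a (Units.mk0 _ h) = 1 := by
  rw [d.tameUnit_of_mem_ker_right (d.one_sub_mem_ker_of_pos ha h),
    d.residueUnit_one_sub_of_pos ha h, one_zpow]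

lemma tameUnit_one_sub_of_neg {a : Lˣ} (ha : (d.v a).toAdd < 0) (h : (1 : L) - a ≠ 0) :
    d.tameUnit a (Units.mk0 _ h) = 1 := by
  have hinv : 0 < (d.v a⁻¹).toAdd := by rw [map_inv, toAdd_inv]; omega
  have hinv' : (1 : L) - a⁻¹ ≠ 0 := by
    rw [sub_ne_zero, ne_comm, Ne, Units.val_eq_one]
    intro hone
    simp [hone] at hinv
  have hfactor : Units.mk0 _ h = -a * Units.mk0 _ hinv' := by
    ext
    simp [mul_sub]
  rw [hfactor, d.tameUnit_mul_right, d.tameUnit_self_neg, one_mul, ← inv_inj,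
    ← d.tameUnit_inv_left, d.tameUnit_one_sub_of_pos hinv, inv_one]

lemma tameUnit_one_sub_of_eq_zero {a : Lˣ} (ha : (d.v a).toAdd = 0) (h : (1 : L) - a ≠ 0) :
    d.tameUnit a (Units.mk0 _ h) = 1 := by
  have hA : ((Units.mk0 _ h : Lˣ) : L) ∈ d.A :=
    sub_mem d.A.one_mem (d.coe_mem_A_of_mem_ker (d.mem_ker_iff.2 ha))
  rcases ((d.memA _).1 hA).eq_or_lt with hzero | hpos
  · rw [d.tameUnit_of_mem_ker_right (d.mem_ker_iff.2 hzero.symm), ha, neg_zero, zpow_zero]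
  · have h' : (1 : L) - Units.mk0 _ h ≠ 0 := by simp
    have hswap := d.tameUnit_one_sub_of_pos hpos h'
    rw [show Units.mk0 _ h' = a from Units.ext (by simp)] at hswap
    rw [d.tameUnit_swap, hswap, inv_one]

lemma tameUnit_one_sub (a : Lˣ) (h : (1 : L) - a ≠ 0) : d.tameUnit a (Units.mk0 _ h) = 1 := by
  rcases lt_trichotomy (d.v a).toAdd 0 with hneg | hzero | hpos
  · exact d.tameUnit_one_sub_of_neg hneg h
  · exact d.tameUnit_one_sub_of_eq_zero hzero h
  · exact d.tameUnit_one_sub_of_pos hpos h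

noncomputable def tameBihom : Additive Lˣ →+ Additive Lˣ →+ Additive κˣ :=
  AddMonoidHom.mk'
    (fun f => AddMonoidHom.mk' (fun g => .ofMul (d.tameUnit f.toMul g.toMul))
      fun g g' => congrArg Additive.ofMul (d.tameUnit_mul_right f.toMul g.toMul g'.toMul))
    fun f f' => AddMonoidHom.ext fun g =>
      congrArg Additive.ofMul (d.tameUnit_mul_left f.toMul f'.toMul g.toMul)

noncomputable def tameK2 : K2M L →+ Additive κˣ :=
  QuotientAddGroup.lift _
    (TensorProduct.liftAddHom d.tameBihom fun r m n => by
      rw [map_zsmul, AddMonoidHom.zsmul_apply, map_zsmul])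
    ((AddSubgroup.closure_le _).2 <| by
      rintro _ ⟨a, h, rfl⟩
      exact congrArg Additive.ofMul (d.tameUnit_one_sub a h))

lemma tameK2_symbol (f g : Lˣ) : d.tameK2 (K2symbol f g) = .ofMul (d.tameUnit f g) := rfl

end DiscValData

/-- For any `a ∈ L^×` with `a ≠ 0, 1`, the tame symbol satisfies
`t(a, 1-a) = 1` in the residue field, so the tame symbol descends to a
homomorphism `K₂ᴹ(L) → κ^×`. -/
theorem stmt3 (L κ : Type*) [Field L] [Field κ] (d : DiscValData L κ) :
    (∀ (a : Lˣ) (h : (1 : L) - a ≠ 0), d.t a (Units.mk0 ((1 : L) - a) h) = 1) ∧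
    ∃ T : K2M L →+ Additive κˣ,
      ∀ f g : Lˣ, ((Additive.toMul (T (K2symbol f g)) : κˣ) : κ) = d.t f g :=
  ⟨fun a h => by rw [← d.coe_tameUnit, d.tameUnit_one_sub, Units.val_one],
    d.tameK2, fun f g => by rw [d.tameK2_symbol, toMul_ofMul, d.coe_tameUnit]⟩
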